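/- Let X be a right A-Galois object. Then every nonzero invariant functional ψ_X on X is faithful: if ψ_X(xy) = 0 for all y ∈ X then x = 0, and if ψ_X(yx) = 0 for all y ∈ X then x = 0. -/

import Mathlib

open TensorProduct

noncomputable section

variable (k : Type*) [Field k]

/-- Apply a linear functional to the second tensor factor. -/
def applySnd {M N : Type*} [AddCommGroup M] [Module k M]
    [AddCommGroup N] [Module k N] (f : N →ₗ[k] k) : M ⊗[k] N →ₗ[k] M :=
  (TensorProduct.rid k M).toLinearMap ∘ₗ LinearMap.lTensor M f

/-- Apply a linear functional to the first tensor factor. -/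
def applyFst {M N : Type*} [AddCommGroup M] [Module k M]
    [AddCommGroup N] [Module k N] (f : M →ₗ[k] k) : M ⊗[k] N →ₗ[k] N :=
  (TensorProduct.lid k N).toLinearMap ∘ₗ LinearMap.rTensor N f

variable (A X : Type*) [Ring A] [HopfAlgebra k A] [Ring X] [Algebra k X]

/-- The Galois map `V : X ⊗ X → X ⊗ A`, `x ⊗ y ↦ (x ⊗ 1) * α y`. -/
def galoisV (α : X →ₐ[k] X ⊗[k] A) : X ⊗[k] X →ₗ[k] X ⊗[k] A :=
  LinearMap.mul' k (X ⊗[k] A) ∘ₗ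
    TensorProduct.map ((TensorProduct.mk k X A).flip 1) α.toLinearMap

/-- A Hopf algebra with bijective antipode and faithful left integral `φ`,
together with a right Galois coaction `α` on `X` with trivial coinvariants. -/
structure GaloisContext where
  φ : A →ₗ[k] k
  φ_ne : φ ≠ 0
  φ_integral : ∀ a : A, applySnd k φ (Coalgebra.comul a) = φ a • (1 : A)
  φ_faithful_left : ∀ a : A, (∀ b : A, φ (a * b) = 0) → a = 0
  φ_faithful_right : ∀ a : A, (∀ b : A, φ (b * a) = 0) → a = 0
  antipode_bijective : Function.Bijective (HopfAlgebra.antipode (R := k) (A := A))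
  α : X →ₐ[k] X ⊗[k] A
  coassoc : ∀ x : X,
    TensorProduct.assoc k X A A ((LinearMap.rTensor A α.toLinearMap) (α x))
      = LinearMap.lTensor X (Coalgebra.comul (R := k) (A := A)) (α x)
  counit_id : ∀ x : X,
    applySnd k (Coalgebra.counit (R := k) (A := A)) (α x) = x
  coinv_trivial : ∀ x : X, α x = x ⊗ₜ[k] (1 : A) → ∃ c : k, x = c • (1 : X)
  galois : Function.Bijective (galoisV k A X α)

variable {k A X}

/-- The Galois map as a linear equivalence. -/
def GaloisContext.V (G : GaloisContext k A X) : (X ⊗[k] X) ≃ₗ[k] (X ⊗[k] A) :=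
  LinearEquiv.ofBijective (galoisV k A X G.α) G.galois

/-- The map `β : A → X ⊗ X`, `a ↦ V⁻¹(1 ⊗ a)`. -/
def GaloisContext.β (G : GaloisContext k A X) : A →ₗ[k] X ⊗[k] X :=
  G.V.symm.toLinearMap ∘ₗ TensorProduct.mk k X A 1

end

/-!
The map `E = (id ⊗ φ) ∘ α` lands in the coinvariants of `X`, i.e. in the scalars, because `φ` is a
left integral. Suppose `ψ(x X) = 0`. Invariance of `ψ` and the identity
`z ⊗ 1 = Σ α(z₍₀₎)(1 ⊗ S z₍₁₎)` give `(ψ(· z) ⊗ id)(α x) = 0` for every `z`, hence `ψ(E(x) z) = 0`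
for every `z`, and since `E(x)` is a scalar while `ψ ≠ 0`, `E(x) = 0`. Applied to `x y` this says
`(id ⊗ φ)(α(x) α(y)) = 0` for all `y`. The elements `α(u)(v ⊗ 1)` produce every `1 ⊗ b` (the Galois
map is onto and `S` is bijective), so `(id ⊗ φ(· b))(α x) = 0` for all `b`; faithfulness of `φ`
gives `α x = 0` and thus `x = 0`. The other side is the mirror image, with `S⁻¹` in place of `S`
and the Galois map itself in place of `u ⊗ v ↦ α(u)(v ⊗ 1)`.
-/

open TensorProduct LinearMap

section Contraction

variable {k : Type*} [Field k] {M N P : Type*} [AddCommGroup M] [Module k M]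
  [AddCommGroup N] [Module k N] [AddCommGroup P] [Module k P]

@[simp] lemma applySnd_tmul (f : N →ₗ[k] k) (m : M) (n : N) :
    applySnd k f (m ⊗ₜ n) = f n • m := by
  simp [applySnd]

@[simp] lemma applyFst_tmul (f : M →ₗ[k] k) (m : M) (n : N) :
    applyFst k f (m ⊗ₜ n) = f m • n := by
  simp [applyFst]

lemma apply_applySnd_eq_apply_applyFst (f : M →ₗ[k] k) (g : N →ₗ[k] k) (t : M ⊗[k] N) :
    f (applySnd k g t) = g (applyFst k f t) := by
  induction t with
  | zero => simp
  | tmul m n => simp [mul_comm]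
  | add s t hs ht => simp [hs, ht]

lemma applySnd_rTensor (f : M →ₗ[k] P) (g : N →ₗ[k] k) (t : M ⊗[k] N) :
    applySnd k g (rTensor N f t) = f (applySnd k g t) := by
  induction t with
  | zero => simp
  | tmul m n => simp
  | add s t hs ht => simp [hs, ht]

lemma applySnd_assoc_symm (g : P →ₗ[k] k) (u : M ⊗[k] (N ⊗[k] P)) :
    applySnd k g ((TensorProduct.assoc k M N P).symm u) = lTensor M (applySnd k g) u := by
  induction u with
  | zero => simp
  | tmul m v =>
    induction v with
    | zero => simp
    | tmul n p => simp
    | add s t hs ht => simp [tmul_add, hs, ht]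
  | add s t hs ht => simp [hs, ht]

lemma lTensor_algebraLinearMap_comp_apply {A : Type*} [Ring A] [Algebra k A]
    (h : A →ₗ[k] k) (t : M ⊗[k] A) :
    lTensor M (Algebra.linearMap k A ∘ₗ h) t = applySnd k h t ⊗ₜ 1 := by
  induction t with
  | zero => simp
  | tmul m a => simp [Algebra.algebraMap_eq_smul_one, smul_tmul]
  | add s t hs ht => simp [add_tmul, hs, ht]

lemma eq_zero_of_forall_applySnd_eq_zero {ι : Type*} (g : ι → N →ₗ[k] k)
    (hg : ∀ n, (∀ i, g i n = 0) → n = 0) {t : M ⊗[k] N}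
    (ht : ∀ i, applySnd k (g i) t = 0) : t = 0 := by
  classical
  let b := Module.Basis.ofVectorSpace k M
  let e := (TensorProduct.congr b.repr (LinearEquiv.refl k N)).trans
    (finsuppScalarLeft k N _)
  have he : ∀ (s : M ⊗[k] N) i, e s i = applyFst k (b.coord i) s := by
    intro s i
    induction s with
    | zero => simp
    | tmul m n => simp [e]
    | add s s' hs hs' => simp [hs, hs']
  refine e.map_eq_zero_iff.mp (Finsupp.ext fun i => hg _ fun j => ?_)
  rw [he, ← apply_applySnd_eq_apply_applyFst, ht, map_zero]

end Contraction

section Multiplication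

variable {k : Type*} [Field k] {X A : Type*} [Ring X] [Algebra k X] [Ring A] [Algebra k A]

lemma applyFst_mul_tmul (ψ : X →ₗ[k] k) (t : X ⊗[k] A) (z : X) (b : A) :
    applyFst k ψ (t * (z ⊗ₜ b)) = applyFst k (ψ ∘ₗ mulRight k z) t * b := by
  induction t with
  | zero => simp
  | tmul u c => simp
  | add s t hs ht => simp [add_mul, hs, ht]

lemma applyFst_tmul_mul (ψ : X →ₗ[k] k) (t : X ⊗[k] A) (z : X) (b : A) :
    applyFst k ψ ((z ⊗ₜ b) * t) = b * applyFst k (ψ ∘ₗ mulLeft k z) t := by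
  induction t with
  | zero => simp
  | tmul u c => simp
  | add s t hs ht => simp [mul_add, hs, ht]

lemma applySnd_mul_tmul (φ : A →ₗ[k] k) (t : X ⊗[k] A) (z : X) (b : A) :
    applySnd k φ (t * (z ⊗ₜ b)) = applySnd k (φ ∘ₗ mulRight k b) t * z := by
  induction t with
  | zero => simp
  | tmul u c => simp
  | add s t hs ht => simp [add_mul, hs, ht]

lemma applySnd_tmul_mul (φ : A →ₗ[k] k) (t : X ⊗[k] A) (z : X) (b : A) :
    applySnd k φ ((z ⊗ₜ b) * t) = z * applySnd k (φ ∘ₗ mulLeft k b) t := by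
  induction t with
  | zero => simp
  | tmul u c => simp
  | add s t hs ht => simp [mul_add, hs, ht]

variable (X) in
def mulRightIncl (f : A →ₗ[k] A) : (X ⊗[k] A) ⊗[k] A →ₗ[k] X ⊗[k] A :=
  lift ((LinearMap.mul k (X ⊗[k] A)).compl₂
    ((Algebra.TensorProduct.includeRight : A →ₐ[k] X ⊗[k] A).toLinearMap ∘ₗ f))

variable (X) in
def mulLeftIncl (f : A →ₗ[k] A) : (X ⊗[k] A) ⊗[k] A →ₗ[k] X ⊗[k] A :=
  lift ((LinearMap.mul k (X ⊗[k] A)).flip.compl₂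
    ((Algebra.TensorProduct.includeRight : A →ₐ[k] X ⊗[k] A).toLinearMap ∘ₗ f))

@[simp] lemma mulRightIncl_tmul (f : A →ₗ[k] A) (q : X ⊗[k] A) (c : A) :
    mulRightIncl X f (q ⊗ₜ c) = q * (1 ⊗ₜ f c) := by
  simp [mulRightIncl]

@[simp] lemma mulLeftIncl_tmul (f : A →ₗ[k] A) (q : X ⊗[k] A) (c : A) :
    mulLeftIncl X f (q ⊗ₜ c) = (1 ⊗ₜ f c) * q := by
  simp [mulLeftIncl]

lemma mulRightIncl_tmul_one_mul (f : A →ₗ[k] A) (q : X ⊗[k] A) (r : (X ⊗[k] A) ⊗[k] A) :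
    mulRightIncl X f ((q ⊗ₜ 1) * r) = q * mulRightIncl X f r := by
  induction r with
  | zero => simp
  | tmul p c => simp [mul_assoc]
  | add s t hs ht => simp [mul_add, hs, ht]

lemma mulRightIncl_assoc_symm (f : A →ₗ[k] A) (u : X ⊗[k] (A ⊗[k] A)) :
    mulRightIncl X f ((TensorProduct.assoc k X A A).symm u)
      = lTensor X (mul' k A ∘ₗ lTensor A f) u := by
  induction u with
  | zero => simp
  | tmul z v =>
    induction v with
    | zero => simp
    | tmul a b => simp
    | add s t hs ht => simp [tmul_add, hs, ht]
  | add s t hs ht => simp [hs, ht]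

lemma mulLeftIncl_assoc_symm (f : A →ₗ[k] A) (u : X ⊗[k] (A ⊗[k] A)) :
    mulLeftIncl X f ((TensorProduct.assoc k X A A).symm u)
      = lTensor X
          (mul' k A ∘ₗ (TensorProduct.comm k A A).toLinearMap ∘ₗ lTensor A f) u := by
  induction u with
  | zero => simp
  | tmul z v =>
    induction v with
    | zero => simp
    | tmul a b => simp
    | add s t hs ht => simp [tmul_add, hs, ht]
  | add s t hs ht => simp [hs, ht]

end Multiplication

namespace HopfAlgebra

variable {R A : Type*} [CommSemiring R] [Semiring A] [HopfAlgebra R A]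

lemma mul'_comm_lTensor_comul_of_antipode_comp_eq_id {f : A →ₗ[R] A}
    (hS : Function.Injective (antipode R (A := A))) (hf : antipode R ∘ₗ f = LinearMap.id) :
    mul' R A ∘ₗ (TensorProduct.comm R A A).toLinearMap ∘ₗ lTensor A f ∘ₗ Coalgebra.comul
      = Algebra.linearMap R A ∘ₗ Coalgebra.counit := by
  have key : antipode R ∘ₗ (mul' R A ∘ₗ (TensorProduct.comm R A A).toLinearMap ∘ₗ
      lTensor A f ∘ₗ Coalgebra.comul) =
        antipode R ∘ₗ (Algebra.linearMap R A ∘ₗ Coalgebra.counit) :=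
    calc _ = (antipode R ∘ₗ mul' R A ∘ₗ (TensorProduct.comm R A A).toLinearMap) ∘ₗ
          lTensor A f ∘ₗ Coalgebra.comul := rfl
      _ = mul' R A ∘ₗ (map (antipode R) (antipode R) ∘ₗ lTensor A f) ∘ₗ
          Coalgebra.comul := by
          rw [antipode_comp_mul_comp_comm]; rfl
      _ = mul' R A ∘ₗ rTensor A (antipode R) ∘ₗ Coalgebra.comul := by
          rw [map_comp_lTensor, hf]; rfl
      _ = _ := by
          rw [mul_antipode_rTensor_comul]; ext; simp [Algebra.algebraMap_eq_smul_one]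
  exact LinearMap.ext fun a => hS congr($key a)

end HopfAlgebra

namespace GaloisContext

variable {k : Type*} [Field k] {A X : Type*} [Ring A] [HopfAlgebra k A] [Ring X] [Algebra k X]
  (G : GaloisContext k A X)

lemma eq_zero_of_coaction_eq_zero {x : X} (hx : G.α x = 0) : x = 0 := by
  simpa [hx] using (G.counit_id x).symm

lemma rTensor_coaction_coaction (x : X) :
    rTensor A G.α.toLinearMap (G.α x)
      = (TensorProduct.assoc k X A A).symm (lTensor X Coalgebra.comul (G.α x)) := by
  rw [← G.coassoc x, LinearEquiv.symm_apply_apply]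

lemma rTensor_coaction_mul (s t : X ⊗[k] A) :
    rTensor A G.α.toLinearMap (s * t)
      = rTensor A G.α.toLinearMap s * rTensor A G.α.toLinearMap t :=
  map_mul (Algebra.TensorProduct.map G.α (AlgHom.id k A)) s t

lemma galoisV_tmul (x y : X) : galoisV k A X G.α (x ⊗ₜ y) = (x ⊗ₜ 1) * G.α y := by
  simp [galoisV]

lemma mulRightIncl_rTensor_coaction {f : A →ₗ[k] A}
    (hf : mul' k A ∘ₗ lTensor A f ∘ₗ Coalgebra.comul
      = Algebra.linearMap k A ∘ₗ Coalgebra.counit)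
    (x : X) : mulRightIncl X f (rTensor A G.α.toLinearMap (G.α x)) = x ⊗ₜ 1 := by
  rw [G.rTensor_coaction_coaction, mulRightIncl_assoc_symm, ← LinearMap.comp_apply,
    ← lTensor_comp, comp_assoc, hf, lTensor_algebraLinearMap_comp_apply, G.counit_id]

lemma mulLeftIncl_rTensor_coaction {f : A →ₗ[k] A}
    (hf : mul' k A ∘ₗ (TensorProduct.comm k A A).toLinearMap ∘ₗ lTensor A f ∘ₗ
        Coalgebra.comul
      = Algebra.linearMap k A ∘ₗ Coalgebra.counit)
    (x : X) : mulLeftIncl X f (rTensor A G.α.toLinearMap (G.α x)) = x ⊗ₜ 1 := by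
  rw [G.rTensor_coaction_coaction, mulLeftIncl_assoc_symm, ← LinearMap.comp_apply,
    ← lTensor_comp, comp_assoc, comp_assoc, hf, lTensor_algebraLinearMap_comp_apply,
    G.counit_id]

lemma mulRightIncl_rTensor_galoisV_tmul (u v : X) :
    mulRightIncl X (HopfAlgebra.antipode k)
        (rTensor A G.α.toLinearMap (galoisV k A X G.α (u ⊗ₜ v))) = G.α u * (v ⊗ₜ 1) := by
  rw [galoisV_tmul, rTensor_coaction_mul, rTensor_tmul, AlgHom.toLinearMap_apply,
    mulRightIncl_tmul_one_mul,
    G.mulRightIncl_rTensor_coaction HopfAlgebra.mul_antipode_lTensor_comul]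

def integrate : X →ₗ[k] X := applySnd k G.φ ∘ₗ G.α.toLinearMap

lemma integrate_apply (x : X) : G.integrate x = applySnd k G.φ (G.α x) := rfl

lemma coaction_integrate (x : X) : G.α (G.integrate x) = G.integrate x ⊗ₜ 1 := by
  have hφ : applySnd k G.φ ∘ₗ Coalgebra.comul = Algebra.linearMap k A ∘ₗ G.φ :=
    LinearMap.ext fun a => by simp [G.φ_integral, Algebra.algebraMap_eq_smul_one]
  calc G.α (G.integrate x) = applySnd k G.φ (rTensor A G.α.toLinearMap (G.α x)) :=
        by rw [applySnd_rTensor]; rfl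
    _ = lTensor X (applySnd k G.φ ∘ₗ Coalgebra.comul) (G.α x) := by
        rw [G.rTensor_coaction_coaction, applySnd_assoc_symm, lTensor_comp_apply]
    _ = G.integrate x ⊗ₜ 1 := by
        rw [hφ, lTensor_algebraLinearMap_comp_apply]; rfl

lemma exists_integrate_eq_smul_one (x : X) : ∃ r : k, G.integrate x = r • 1 :=
  G.coinv_trivial _ (G.coaction_integrate x)

section Invariant

variable {G} {ψ : X →ₗ[k] k}

lemma applyFst_mulRight_coaction_eq_zero
    (hψ : ∀ x : X, applyFst k ψ (G.α x) = ψ x • (1 : A)) {x : X}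
    (hx : ∀ y, ψ (x * y) = 0) (z : X) :
    applyFst k (ψ ∘ₗ mulRight k z) (G.α x) = 0 := by
  have h : ∀ t : X ⊗[k] A, applyFst k ψ
      (G.α x * mulRightIncl X (HopfAlgebra.antipode k) (rTensor A G.α.toLinearMap t)) = 0 := by
    intro t
    induction t with
    | zero => simp
    | tmul u c =>
      rw [rTensor_tmul, mulRightIncl_tmul, AlgHom.toLinearMap_apply, ← mul_assoc, ← map_mul,
        applyFst_mul_tmul, mulRight_one, comp_id, hψ, hx, zero_smul, zero_mul]
    | add s t hs ht => rw [map_add, map_add, mul_add, map_add, hs, ht, add_zero]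
  simpa [G.mulRightIncl_rTensor_coaction HopfAlgebra.mul_antipode_lTensor_comul,
    applyFst_mul_tmul] using h (G.α z)

lemma applyFst_mulLeft_coaction_eq_zero
    (hψ : ∀ x : X, applyFst k ψ (G.α x) = ψ x • (1 : A)) {x : X}
    (hx : ∀ y, ψ (y * x) = 0) (z : X) :
    applyFst k (ψ ∘ₗ mulLeft k z) (G.α x) = 0 := by
  let S := LinearEquiv.ofBijective (HopfAlgebra.antipode k) G.antipode_bijective
  have hS : HopfAlgebra.antipode k ∘ₗ S.symm.toLinearMap = LinearMap.id :=
    LinearMap.ext S.apply_symm_apply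
  have h : ∀ t : X ⊗[k] A, applyFst k ψ
      (mulLeftIncl X S.symm.toLinearMap (rTensor A G.α.toLinearMap t) * G.α x) = 0 := by
    intro t
    induction t with
    | zero => simp
    | tmul u c =>
      rw [rTensor_tmul, mulLeftIncl_tmul, AlgHom.toLinearMap_apply, mul_assoc, ← map_mul,
        applyFst_tmul_mul, mulLeft_one, comp_id, hψ, hx, zero_smul, mul_zero]
    | add s t hs ht => rw [map_add, map_add, add_mul, map_add, hs, ht, add_zero]
  simpa [G.mulLeftIncl_rTensor_coaction
    (HopfAlgebra.mul'_comm_lTensor_comul_of_antipode_comp_eq_id G.antipode_bijective.1 hS),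
    applyFst_tmul_mul] using h (G.α z)

lemma integrate_eq_zero_of_forall_mul_right
    (hψ : ∀ x : X, applyFst k ψ (G.α x) = ψ x • (1 : A)) (hψ0 : ψ ≠ 0)
    {x : X} (hx : ∀ y, ψ (x * y) = 0) : G.integrate x = 0 := by
  obtain ⟨r, hr⟩ := G.exists_integrate_eq_smul_one x
  obtain ⟨w, hw⟩ : ∃ w, ψ w ≠ 0 := by simpa [LinearMap.ext_iff] using hψ0
  have h : (ψ ∘ₗ mulRight k w) (G.integrate x) = 0 := by
    rw [integrate_apply, apply_applySnd_eq_apply_applyFst,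
      applyFst_mulRight_coaction_eq_zero hψ hx, map_zero]
  simp only [hr, comp_apply, mulRight_apply, one_mul, map_smul, smul_eq_mul, mul_eq_zero] at h
  simp [hr, h.resolve_right hw]

lemma integrate_eq_zero_of_forall_mul_left
    (hψ : ∀ x : X, applyFst k ψ (G.α x) = ψ x • (1 : A)) (hψ0 : ψ ≠ 0)
    {x : X} (hx : ∀ y, ψ (y * x) = 0) : G.integrate x = 0 := by
  obtain ⟨r, hr⟩ := G.exists_integrate_eq_smul_one x
  obtain ⟨w, hw⟩ : ∃ w, ψ w ≠ 0 := by simpa [LinearMap.ext_iff] using hψ0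
  have h : (ψ ∘ₗ mulLeft k w) (G.integrate x) = 0 := by
    rw [integrate_apply, apply_applySnd_eq_apply_applyFst,
      applyFst_mulLeft_coaction_eq_zero hψ hx, map_zero]
  simp only [hr, comp_apply, mulLeft_apply, mul_one, map_smul, smul_eq_mul, mul_eq_zero] at h
  simp [hr, h.resolve_right hw]

end Invariant

lemma eq_zero_of_forall_integrate_mul_right {x : X} (hx : ∀ y, G.integrate (x * y) = 0) :
    x = 0 := by
  have hV : ∀ p, applySnd k G.φ (G.α x * mulRightIncl X (HopfAlgebra.antipode k)
      (rTensor A G.α.toLinearMap (galoisV k A X G.α p))) = 0 := by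
    intro p
    induction p with
    | zero => simp
    | tmul u v =>
      rw [mulRightIncl_rTensor_galoisV_tmul, ← mul_assoc, ← map_mul, applySnd_mul_tmul,
        mulRight_one, comp_id, ← G.integrate_apply, hx, zero_mul]
    | add s t hs ht => rw [map_add, map_add, map_add, mul_add, map_add, hs, ht, add_zero]
  have hb : ∀ b, applySnd k (G.φ ∘ₗ mulRight k b) (G.α x) = 0 := by
    intro b
    obtain ⟨a, rfl⟩ := G.antipode_bijective.2 b
    obtain ⟨p, hp⟩ := G.galois.2 (1 ⊗ₜ a)
    simpa [hp, applySnd_mul_tmul] using hV p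
  refine G.eq_zero_of_coaction_eq_zero (eq_zero_of_forall_applySnd_eq_zero _ ?_ hb)
  exact fun c hc => G.φ_faithful_left c (by simpa using hc)

lemma eq_zero_of_forall_integrate_mul_left {x : X} (hx : ∀ y, G.integrate (y * x) = 0) :
    x = 0 := by
  have hV : ∀ p, applySnd k G.φ (galoisV k A X G.α p * G.α x) = 0 := by
    intro p
    induction p with
    | zero => simp
    | tmul u v =>
      rw [galoisV_tmul, mul_assoc, ← map_mul, applySnd_tmul_mul, mulLeft_one, comp_id,
        ← G.integrate_apply, hx, mul_zero]
    | add s t hs ht => rw [map_add, add_mul, map_add, hs, ht, add_zero]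
  have hb : ∀ b, applySnd k (G.φ ∘ₗ mulLeft k b) (G.α x) = 0 := by
    intro b
    obtain ⟨p, hp⟩ := G.galois.2 (1 ⊗ₜ b)
    simpa [hp, applySnd_tmul_mul] using hV p
  refine G.eq_zero_of_coaction_eq_zero (eq_zero_of_forall_applySnd_eq_zero _ ?_ hb)
  exact fun c hc => G.φ_faithful_right c (by simpa using hc)

end GaloisContext

theorem galois_object_invariant_functional_faithful_general
    {k : Type*} [Field k] {A X : Type*} [Ring A] [HopfAlgebra k A]
    [Ring X] [Algebra k X]
    (G : GaloisContext k A X)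
    (ψX : X →ₗ[k] k) (hψX_ne : ψX ≠ 0)
    (hψX : ∀ x : X, applyFst k ψX (G.α x) = ψX x • (1 : A)) :
    (∀ x : X, (∀ y : X, ψX (x * y) = 0) → x = 0) ∧
    (∀ x : X, (∀ y : X, ψX (y * x) = 0) → x = 0) := by
  refine ⟨fun x hx => G.eq_zero_of_forall_integrate_mul_right fun y => ?_,
    fun x hx => G.eq_zero_of_forall_integrate_mul_left fun y => ?_⟩
  · exact GaloisContext.integrate_eq_zero_of_forall_mul_right hψX hψX_ne fun z => by
      simpa [mul_assoc] using hx (y * z)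
  · exact GaloisContext.integrate_eq_zero_of_forall_mul_left hψX hψX_ne fun z => by
      simpa [mul_assoc] using hx (z * y)

theorem galois_object_invariant_functional_faithful
    {k : Type*} [Field k] {A X : Type*} [Ring A] [HopfAlgebra k A]
    [Ring X] [Algebra k X] [Nontrivial X]
    (G : GaloisContext k A X)
    (ψX : X →ₗ[k] k) (hψX_ne : ψX ≠ 0)
    (hψX : ∀ x : X, applyFst k ψX (G.α x) = ψX x • (1 : A)) :
    (∀ x : X, (∀ y : X, ψX (x * y) = 0) → x = 0) ∧
    (∀ x : X, (∀ y : X, ψX (y * x) = 0) → x = 0) :=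
  galois_object_invariant_functional_faithful_general G ψX hψX_ne hψX
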